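/- arXiv:2406.19579 — 3 statements merged into one kernel-verified Lean document; each statement's English description precedes it below -/
import Mathlib

section
/- For all natural numbers n ≥ 1, the ratio of double factorials satisfies n!!/(n-1)!! ≤ √(2n). -/
open scoped Nat

lemma dfact_sq_le : ∀ n : ℕ, 1 ≤ n → (n‼)^2 ≤ 2 * n * ((n-1)‼)^2 := by
  intro n
  induction n using Nat.strong_induction_on with
  | _ n ih =>
    match n with
    | 0 => intro h; exact absurd h (by omega)
    | 1 => intro _; simp [Nat.doubleFactorial]
    | 2 => intro _; simp [Nat.doubleFactorial]
    | (m+3) =>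
      intro _
      have hm : 1 ≤ m + 1 := by omega
      have h := ih (m+1) (by omega) hm
      have : (m+3)‼ = (m+3) * (m+1)‼ := rfl
      rw [this]
      have h2 : (m+2)‼ = (m+2) * m‼ := rfl
      have h3 : m+3-1 = m+2 := rfl
      rw [h3, h2]
      simp only [Nat.add_sub_cancel] at h
      have key : (m+3) * (m+1) ≤ (m+2)^2 := by ring_nf; omega
      calc ((m+3) * (m+1)‼)^2 = (m+3)^2 * ((m+1)‼)^2 := by ring
        _ ≤ (m+3)^2 * (2 * (m+1) * (m‼)^2) := by
            exact Nat.mul_le_mul_left _ h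
        _ = (m+3) * ((m+3)*(m+1)) * (2 * (m‼)^2) := by ring
        _ ≤ (m+3) * (m+2)^2 * (2 * (m‼)^2) := by
            exact Nat.mul_le_mul_right _ (Nat.mul_le_mul_left _ key)
        _ = 2 * (m+3) * ((m+2) * m‼)^2 := by ring

/-- For all natural numbers `n ≥ 1`, `n‼ / (n-1)‼ ≤ √(2n)`. -/
theorem doubleFactorial_ratio_le_sqrt (n : ℕ) (hn : 1 ≤ n) :
    (Nat.doubleFactorial n : ℝ) / (Nat.doubleFactorial (n - 1) : ℝ) ≤
      Real.sqrt (2 * n) := by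
  have hd : (0:ℝ) < (Nat.doubleFactorial (n-1) : ℝ) := by
    exact_mod_cast Nat.doubleFactorial_pos _
  have hx : (0:ℝ) ≤ (Nat.doubleFactorial n : ℝ) / (Nat.doubleFactorial (n - 1) : ℝ) := by
    positivity
  rw [show Real.sqrt (2*n) = Real.sqrt (2*n) from rfl, ← Real.sqrt_sq hx]
  apply Real.sqrt_le_sqrt
  rw [div_pow, div_le_iff₀ (by positivity)]
  have := dfact_sq_le n hn
  exact_mod_cast this
end

section
/- Let x, y ∈ ℝ^d and δ > 0, and let S = B(x,δ) △ B(y,δ) be the symmetric difference of the two open Euclidean balls of radius δ centered at x and y. Then vol(S)/vol(B(0,δ)) ≤ (√d/δ)·‖x − y‖. -/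
/-!
Translating, we may compare `B = ball 0 δ` with `B' = ball v δ`, `v = y - x`. Both have the same
volume, so `vol (B ∆ B') = 2 vol (B \ B')`. Below the bisecting hyperplane `⟪z, v⟫ = ‖v‖²/2`
the ball `B'` lies inside `B` and is the translate of the part of `B` below `⟪z, v⟫ = -‖v‖²/2`;
hence `B \ B'` has at most the volume of the part of `B` in the slab between these hyperplanes,
which by Fubini is at most `‖v‖ · V_{d-1}(δ)`. Finally `2 V_{d-1}(δ) ≤ (√d / δ) V_d(δ)` follows
from the log-convexity of `Γ`, in the form `Γ(s + 1/2) ≤ √s Γ(s)`.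
-/

open MeasureTheory Metric Real Set
open scoped RealInnerProductSpace symmDiff

section Slab

variable {E : Type*} [NormedAddCommGroup E] [InnerProductSpace ℝ E]

/-- The slab of width `‖v‖` orthogonal to `v` and centred at `0`. It is half-open so that
the half-space `⟪z, v⟫ ≤ ‖v‖ ^ 2 / 2` is the disjoint union of the slab and the half-space
`⟪z, v⟫ ≤ -(‖v‖ ^ 2 / 2)`. -/
def centredSlab (v : E) : Set E :=
  {z | ⟪z, v⟫ ∈ Ioc (-(‖v‖ ^ 2 / 2)) (‖v‖ ^ 2 / 2)}

lemma preimage_centredSlab (T : E ≃ₗᵢ[ℝ] E) (v : E) :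
    T ⁻¹' centredSlab (T v) = centredSlab v := by
  ext z
  simp only [centredSlab, mem_preimage, mem_ofPred_eq, T.inner_map_map, T.norm_map]

lemma inner_lt_of_mem_ball_zero_of_notMem_ball {z v : E} {δ : ℝ} (hz : z ∈ ball 0 δ)
    (hzv : z ∉ ball v δ) : ⟪z, v⟫ < ‖v‖ ^ 2 / 2 := by
  rw [mem_ball_zero_iff] at hz
  rw [mem_ball_iff_norm, not_lt] at hzv
  have := norm_sub_sq_real z v
  nlinarith [norm_nonneg z, norm_nonneg (z - v)]

lemma mem_ball_zero_of_mem_ball_of_inner_le {z v : E} {δ : ℝ} (hz : z ∈ ball v δ)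
    (hzv : ⟪z, v⟫ ≤ ‖v‖ ^ 2 / 2) : z ∈ ball 0 δ := by
  rw [mem_ball_iff_norm] at hz
  rw [mem_ball_zero_iff]
  have := norm_sub_sq_real z v
  nlinarith [norm_nonneg z, norm_nonneg (z - v)]

variable [MeasurableSpace E] [BorelSpace E] [ProperSpace E] (μ : Measure E)
  [μ.IsAddLeftInvariant] [IsFiniteMeasureOnCompacts μ]

lemma measure_ball_zero_sdiff_ball_le (v : E) (δ : ℝ) :
    μ (ball 0 δ \ ball v δ) ≤ μ (ball 0 δ ∩ centredSlab v) := by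
  set c := ‖v‖ ^ 2 / 2
  have hmeas (a : ℝ) : MeasurableSet {z : E | ⟪z, v⟫ ≤ a} :=
    measurableSet_le (by fun_prop) measurable_const
  have htrans : (v + ·) ⁻¹' (ball v δ ∩ {z | ⟪z, v⟫ ≤ c}) = ball 0 δ ∩ {z | ⟪z, v⟫ ≤ -c} := by
    ext z
    simp only [preimage_inter, preimage_add_ball, sub_self, mem_inter_iff, mem_preimage,
      mem_ofPred_eq, inner_add_left, real_inner_self_eq_norm_sq, c]
    constructor <;> rintro ⟨h₁, h₂⟩ <;> exact ⟨h₁, by linarith⟩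
  have hsub : ball v δ ∩ {z | ⟪z, v⟫ ≤ c} ⊆ ball 0 δ ∩ {z | ⟪z, v⟫ ≤ c} :=
    fun z ⟨hz, hzc⟩ ↦ ⟨mem_ball_zero_of_mem_ball_of_inner_le hz hzc, hzc⟩
  have hdiff :
      ball 0 δ \ ball v δ ⊆ (ball 0 δ ∩ {z | ⟪z, v⟫ ≤ c}) \ (ball v δ ∩ {z | ⟪z, v⟫ ≤ c}) :=
    fun z ⟨hz, hzv⟩ ↦
      ⟨⟨hz, (inner_lt_of_mem_ball_zero_of_notMem_ball hz hzv).le⟩, fun h ↦ hzv h.1⟩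
  have hsplit : ball 0 δ ∩ {z | ⟪z, v⟫ ≤ c} ⊆
      (ball 0 δ ∩ {z | ⟪z, v⟫ ≤ -c}) ∪ (ball 0 δ ∩ centredSlab v) := by
    rintro z ⟨hz, hzc⟩
    by_cases h : ⟪z, v⟫ ≤ -c
    · exact Or.inl ⟨hz, h⟩
    · exact Or.inr ⟨hz, not_le.mp h, hzc⟩
  have hfin : μ (ball v δ ∩ {z | ⟪z, v⟫ ≤ c}) ≠ ⊤ :=
    ne_top_of_le_ne_top measure_ball_lt_top.ne (measure_mono inter_subset_left)
  have hshift : μ (ball v δ ∩ {z | ⟪z, v⟫ ≤ c}) = μ (ball 0 δ ∩ {z | ⟪z, v⟫ ≤ -c}) := by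
    rw [← htrans, measure_preimage_add]
  calc μ (ball 0 δ \ ball v δ)
      ≤ μ ((ball 0 δ ∩ {z | ⟪z, v⟫ ≤ c}) \ (ball v δ ∩ {z | ⟪z, v⟫ ≤ c})) := measure_mono hdiff
    _ ≤ μ (ball 0 δ ∩ centredSlab v) := by
      rw [measure_sdiff_le_iff_le_add (measurableSet_ball.inter (hmeas c)).nullMeasurableSet hsub
        hfin, hshift]
      exact (measure_mono hsplit).trans (measure_union_le _ _)

lemma measure_symmDiff_ball_le (x y : E) (δ : ℝ) :
    μ (ball x δ ∆ ball y δ) ≤ 2 * μ (ball 0 δ ∩ centredSlab (y - x)) := by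
  have hshift : μ (ball x δ ∆ ball y δ) = μ (ball 0 δ ∆ ball (y - x) δ) := by
    rw [← measure_preimage_add μ x, preimage_symmDiff, preimage_add_ball, preimage_add_ball,
      sub_self]
  have hball : μ (ball (y - x) δ) = μ (ball 0 δ) := by
    rw [← measure_preimage_add μ (y - x), preimage_add_ball, sub_self]
  have hsymm : μ (ball (y - x) δ \ ball 0 δ) = μ (ball 0 δ \ ball (y - x) δ) :=
    measure_sdiff_symm measurableSet_ball.nullMeasurableSet measurableSet_ball.nullMeasurableSet
      hball (ne_top_of_le_ne_top measure_ball_lt_top.ne (measure_mono inter_subset_right))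
  rw [hshift, measure_symmDiff_eq measurableSet_ball.nullMeasurableSet
    measurableSet_ball.nullMeasurableSet, hsymm, ← two_mul]
  exact mul_le_mul_right (measure_ball_zero_sdiff_ball_le μ _ δ) 2

end Slab

lemma EuclideanSpace.norm_comp_succAbove_le {n : ℕ} (z : EuclideanSpace ℝ (Fin (n + 1)))
    (i : Fin (n + 1)) : ‖WithLp.toLp 2 (fun j ↦ z (i.succAbove j))‖ ≤ ‖z‖ := by
  refine le_of_sq_le_sq ?_ (norm_nonneg _)
  rw [EuclideanSpace.norm_sq_eq, EuclideanSpace.norm_sq_eq, Fin.sum_univ_succAbove _ i]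
  exact le_add_of_nonneg_left (sq_nonneg _)

lemma EuclideanSpace.volume_ball_inter_coord_mem_le (n : ℕ) (i : Fin (n + 1)) (δ : ℝ)
    (I : Set ℝ) :
    volume (ball (0 : EuclideanSpace ℝ (Fin (n + 1))) δ ∩ {z | z i ∈ I}) ≤
      volume I * volume (ball (0 : EuclideanSpace ℝ (Fin n)) δ) := by
  let e := (MeasurableEquiv.toLp 2 (Fin (n + 1) → ℝ)).symm.trans
    (MeasurableEquiv.piFinSuccAbove (fun _ ↦ ℝ) i)
  have he : MeasurePreserving e volume volume :=
    (volume_preserving_piFinSuccAbove _ i).comp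
      (EuclideanSpace.volume_preserving_symm_measurableEquiv_toLp _)
  have hsub : ball 0 δ ∩ {z | z i ∈ I} ⊆ e ⁻¹' (I ×ˢ (WithLp.toLp 2 ⁻¹' ball 0 δ)) := by
    rintro z ⟨hz, hzI⟩
    refine ⟨hzI, ?_⟩
    rw [mem_preimage, mem_ball_zero_iff]
    show ‖WithLp.toLp 2 (fun j ↦ z (i.succAbove j))‖ < δ
    exact (norm_comp_succAbove_le z i).trans_lt (mem_ball_zero_iff.mp hz)
  calc volume (ball (0 : EuclideanSpace ℝ (Fin (n + 1))) δ ∩ {z | z i ∈ I})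
      ≤ volume (I ×ˢ (WithLp.toLp 2 ⁻¹' ball (0 : EuclideanSpace ℝ (Fin n)) δ)) :=
        (measure_mono hsub).trans_eq (he.measure_preimage_equiv _)
    _ = volume I * volume (ball (0 : EuclideanSpace ℝ (Fin n)) δ) := by
      rw [Measure.volume_eq_prod, Measure.prod_prod,
        (PiLp.volume_preserving_toLp (Fin n)).measure_preimage measurableSet_ball.nullMeasurableSet]

lemma mem_Icc_of_mul_mem_Ioc {r a : ℝ} (hr : 0 ≤ r)
    (h : r * a ∈ Ioc (-(r ^ 2 / 2)) (r ^ 2 / 2)) : a ∈ Icc (-(r / 2)) (r / 2) := by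
  obtain ⟨h₁, h₂⟩ := h
  rcases hr.eq_or_lt with rfl | hr
  · simp at h₁
  · constructor <;> nlinarith

lemma EuclideanSpace.volume_ball_inter_centredSlab_le (n : ℕ)
    (v : EuclideanSpace ℝ (Fin (n + 1))) (δ : ℝ) :
    volume (ball 0 δ ∩ centredSlab v) ≤
      ENNReal.ofReal ‖v‖ * volume (ball (0 : EuclideanSpace ℝ (Fin n)) δ) := by
  set w : EuclideanSpace ℝ (Fin (n + 1)) := EuclideanSpace.single 0 ‖v‖
  have hw : ‖w‖ = ‖v‖ := by simp [w]
  let T := (ℝ ∙ (w - v))ᗮ.reflection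
  have hT : T w = v := Submodule.reflection_sub hw
  have hpre : T ⁻¹' (ball 0 δ ∩ centredSlab v) = ball 0 δ ∩ centredSlab w := by
    rw [preimage_inter, T.preimage_ball, map_zero, ← hT, preimage_centredSlab]
  have hsub :
      ball 0 δ ∩ centredSlab w ⊆ ball 0 δ ∩ {z | z 0 ∈ Icc (-(‖v‖ / 2)) (‖v‖ / 2)} := by
    rintro z ⟨hz, hzw⟩
    refine ⟨hz, mem_Icc_of_mul_mem_Ioc (norm_nonneg v) ?_⟩
    simpa [centredSlab, hw, w, EuclideanSpace.inner_single_right] using hzw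
  calc volume (ball 0 δ ∩ centredSlab v)
      = volume (ball 0 δ ∩ centredSlab w) := by
        rw [← hpre]
        exact (T.measurePreserving.measure_preimage_equiv (f := T.toMeasurableEquiv) _).symm
    _ ≤ volume (Icc (-(‖v‖ / 2)) (‖v‖ / 2)) * volume (ball (0 : EuclideanSpace ℝ (Fin n)) δ) :=
        (measure_mono hsub).trans (volume_ball_inter_coord_mem_le n 0 δ _)
    _ = ENNReal.ofReal ‖v‖ * volume (ball (0 : EuclideanSpace ℝ (Fin n)) δ) := by
        rw [Real.volume_Icc, sub_neg_eq_add, add_halves]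

lemma Real.Gamma_add_half_le {s : ℝ} (hs : 0 < s) : Gamma (s + 1 / 2) ≤ √s * Gamma s := by
  have hconv := Gamma_mul_add_mul_le_rpow_Gamma_mul_rpow_Gamma hs (by linarith : 0 < s + 1)
    one_half_pos one_half_pos (add_halves 1)
  have hΓ := Gamma_pos_of_pos hs
  rw [Gamma_add_one hs.ne', ← mul_rpow hΓ.le (by positivity), ← sqrt_eq_rpow,
    show Gamma s * (s * Gamma s) = s * Gamma s ^ 2 by ring, sqrt_mul hs.le,
    sqrt_sq hΓ.le] at hconv
  convert hconv using 2
  ring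

lemma Real.two_mul_Gamma_succ_div_two_add_one_le (n : ℕ) :
    2 * Gamma ((n + 1) / 2 + 1) ≤ √(n + 1) * √π * Gamma (n / 2 + 1) := by
  rcases n.eq_zero_or_pos with rfl | hn
  · rw [show ((0 : ℕ) + 1 : ℝ) / 2 + 1 = 1 / 2 + 1 by norm_num, Gamma_add_one (by norm_num),
      Gamma_one_half_eq]
    simp
  have hs : (0 : ℝ) < n / 2 + 1 := by positivity
  have hsqrt : 2 * √(n / 2 + 1) ≤ √(n + 1) * √π := by
    have : (2 * n + 4 : ℝ) ≤ (n + 1) * π := by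
      have : (1 : ℝ) ≤ n := by exact_mod_cast hn
      nlinarith [pi_gt_three]
    rw [← sqrt_mul (by positivity), show (2 : ℝ) = √4 by norm_num, ← sqrt_mul (by norm_num)]
    exact sqrt_le_sqrt (by linarith)
  calc 2 * Gamma ((n + 1) / 2 + 1) = 2 * Gamma ((n / 2 + 1) + 1 / 2) := by ring_nf
    _ ≤ 2 * (√(n / 2 + 1) * Gamma (n / 2 + 1)) := by gcongr; exact Gamma_add_half_le hs
    _ ≤ √(n + 1) * √π * Gamma (n / 2 + 1) := by
      rw [← mul_assoc]; gcongr

lemma EuclideanSpace.volume_ball_zero_toReal (n : ℕ) {δ : ℝ} (hδ : 0 < δ) :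
    (volume (ball (0 : EuclideanSpace ℝ (Fin n)) δ)).toReal =
      δ ^ n * (√π ^ n / Gamma (n / 2 + 1)) := by
  rcases n.eq_zero_or_pos with rfl | hn
  · have huniv : ball (0 : EuclideanSpace ℝ (Fin 0)) δ = univ :=
      eq_univ_of_forall fun z ↦ by simpa [Subsingleton.elim z 0] using hδ
    rw [huniv, ← (PiLp.volume_preserving_toLp (Fin 0)).measure_preimage
      MeasurableSet.univ.nullMeasurableSet, preimage_univ, volume_pi, Measure.pi_univ]
    simp
  · have : Nonempty (Fin n) := Fin.pos_iff_nonempty.mp hn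
    rw [EuclideanSpace.volume_ball, Fintype.card_fin, ENNReal.toReal_mul, ENNReal.toReal_pow,
      ENNReal.toReal_ofReal hδ.le,
      ENNReal.toReal_ofReal (div_pos (by positivity) (Gamma_pos_of_pos (by positivity))).le]

lemma EuclideanSpace.two_mul_volume_ball_le (n : ℕ) {δ : ℝ} (hδ : 0 < δ) :
    2 * (volume (ball (0 : EuclideanSpace ℝ (Fin n)) δ)).toReal ≤
      √(n + 1) / δ * (volume (ball (0 : EuclideanSpace ℝ (Fin (n + 1))) δ)).toReal := by
  rw [volume_ball_zero_toReal n hδ, volume_ball_zero_toReal (n + 1) hδ]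
  push_cast
  have ha := Gamma_pos_of_pos (by positivity : (0 : ℝ) < n / 2 + 1)
  have hb := Gamma_pos_of_pos (by positivity : (0 : ℝ) < (n + 1) / 2 + 1)
  calc 2 * (δ ^ n * (√π ^ n / Gamma (n / 2 + 1)))
      = δ ^ n * √π ^ n / (Gamma (n / 2 + 1) * Gamma ((n + 1) / 2 + 1)) *
          (2 * Gamma ((n + 1) / 2 + 1)) := by field_simp
    _ ≤ δ ^ n * √π ^ n / (Gamma (n / 2 + 1) * Gamma ((n + 1) / 2 + 1)) *
          (√(n + 1) * √π * Gamma (n / 2 + 1)) :=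
          mul_le_mul_of_nonneg_left (two_mul_Gamma_succ_div_two_add_one_le n) (by positivity)
    _ = √(n + 1) / δ * (δ ^ (n + 1) * (√π ^ (n + 1) / Gamma ((n + 1) / 2 + 1))) := by
      field_simp; ring

/-- The volume of the symmetric difference of two balls of radius `δ`, relative to the
volume of a ball of radius `δ`, is at most `(√d/δ)·‖x − y‖`. -/
theorem volume_symmDiff_ball_div_le (d : ℕ) (δ : ℝ) (hδ : 0 < δ)
    (x y : EuclideanSpace ℝ (Fin d)) :
    (volume (symmDiff (ball x δ) (ball y δ))).toReal /
        (volume (ball (0 : EuclideanSpace ℝ (Fin d)) δ)).toReal ≤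
      Real.sqrt d / δ * ‖x - y‖ := by
  obtain _ | n := d
  · simp [Subsingleton.elim x y]
  set V := volume (ball (0 : EuclideanSpace ℝ (Fin n)) δ)
  set W := volume (ball (0 : EuclideanSpace ℝ (Fin (n + 1))) δ)
  have hsd : (volume (ball x δ ∆ ball y δ)).toReal ≤ ‖x - y‖ * (2 * V.toReal) := by
    have h := (measure_symmDiff_ball_le volume x y δ).trans
      (mul_le_mul_right (EuclideanSpace.volume_ball_inter_centredSlab_le n (y - x) δ) 2)
    refine (ENNReal.toReal_mono (by finiteness) h).trans_eq ?_
    simp only [ENNReal.toReal_mul, ENNReal.toReal_ofNat, ENNReal.toReal_ofReal (norm_nonneg _),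
      norm_sub_rev y x]
    ring
  have hW : 0 < W.toReal :=
    ENNReal.toReal_pos (measure_ball_pos volume 0 hδ).ne' measure_ball_lt_top.ne
  rw [div_le_iff₀ hW]
  calc (volume (ball x δ ∆ ball y δ)).toReal ≤ ‖x - y‖ * (2 * V.toReal) := hsd
    _ ≤ ‖x - y‖ * (√(n + 1) / δ * W.toReal) :=
        mul_le_mul_of_nonneg_left (EuclideanSpace.two_mul_volume_ball_le n hδ) (norm_nonneg _)
    _ = √↑(n + 1) / δ * ‖x - y‖ * W.toReal := by
        push_cast
        ring
end

section
/- If h : ℝ^d → ℝ is L-Lipschitz, then the gradient of its uniform smoothing ĥ_δ is (√d·L/δ)-Lipschitz, i.e., ĥ_δ is (√d·L/δ)-smooth. -/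
/-!
Averaging over the unit ball makes `ĥ_δ x` the mean of `h` over the ball `B(x, δ)`. A Lipschitz `h`
is differentiable almost everywhere with `‖Dh‖ ≤ L` (Rademacher), so differentiating under the
integral shows that `Dĥ_δ x` is the mean of `Dh` over `B(x, δ)`. Two such means differ by at most
`L · vol (B(x, δ) Δ B(y, δ)) / vol B(δ)`. On every line parallel to `x - y`, each half of the
symmetric difference is an interval minus its translate by `‖x - y‖`, so by Fubini it has volume
at most `‖x - y‖ · ω_{d-1} δ^(d-1)`, where `ω_k` is the volume of the unit ball of `ℝ^k`. The
Gautschi-type inequality `2 ω_{d-1} ≤ √d ω_d` then yields the constant `√d L / δ`.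
-/

open MeasureTheory Metric

/-- The uniform probability measure on the closed unit Euclidean ball in `ℝ^d`. -/
noncomputable def unifBall (d : ℕ) : Measure (EuclideanSpace ℝ (Fin d)) :=
  (volume (closedBall (0 : EuclideanSpace ℝ (Fin d)) 1))⁻¹ •
    volume.restrict (closedBall (0 : EuclideanSpace ℝ (Fin d)) 1)

open Real
open scoped NNReal

theorem Real.sqrt_mul_Gamma_le (n : ℕ) :
    √(n + 1) * Gamma ((n + 1) / 2) ≤ √π * Gamma (n / 2 + 1) := by
  induction n using Nat.strong_induction_on with
  | _ n ih =>
    match n with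
    | 0 => simp [-one_div, Gamma_one_half_eq]
    | 1 =>
      have h32 : Gamma (3 / 2) = √π / 2 := by
        rw [show (3 : ℝ) / 2 = 1 / 2 + 1 by norm_num, Gamma_add_one (by norm_num),
          Gamma_one_half_eq]; ring
      have hs2 : √2 ≤ 3 / 2 := by
        rw [sqrt_le_left (by norm_num)]; norm_num
      norm_num [h32, Gamma_one]
      nlinarith [mul_self_sqrt pi_nonneg, pi_gt_three]
    | m + 2 =>
      have hrec : √(m + 3) * (m + 1) ≤ √(m + 1) * (m + 2) := by
        rw [← pow_le_pow_iff_left₀ (by positivity) (by positivity) two_ne_zero, mul_pow, mul_pow,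
          sq_sqrt (by positivity), sq_sqrt (by positivity)]
        nlinarith
      push_cast
      rw [show ((m : ℝ) + 2 + 1) / 2 = (m + 1) / 2 + 1 by ring,
        show ((m : ℝ) + 2) / 2 + 1 = (m / 2 + 1) + 1 by ring,
        Gamma_add_one (by positivity), Gamma_add_one (by positivity)]
      calc √(m + 2 + 1) * ((m + 1) / 2 * Gamma ((m + 1) / 2))
          = (√(m + 3) * (m + 1)) * Gamma ((m + 1) / 2) / 2 := by ring_nf
        _ ≤ (√(m + 1) * (m + 2)) * Gamma ((m + 1) / 2) / 2 := by gcongr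
        _ = (m / 2 + 1) * (√(m + 1) * Gamma ((m + 1) / 2)) := by ring
        _ ≤ (m / 2 + 1) * (√π * Gamma (m / 2 + 1)) := by
          gcongr ?_ * ?_
          exact ih m (by omega)
        _ = √π * ((m / 2 + 1) * Gamma (m / 2 + 1)) := by ring

theorem EuclideanSpace.measureReal_closedBall_fin (n : ℕ) (x : EuclideanSpace ℝ (Fin n)) {r : ℝ}
    (hr : 0 ≤ r) : volume.real (closedBall x r) = r ^ n * (√π ^ n / Gamma (n / 2 + 1)) := by
  rcases n with _ | n
  · simp [volume_euclideanSpace_eq_dirac, Measure.real, hr, Subsingleton.elim x 0]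
  · rw [Measure.real, EuclideanSpace.volume_closedBall, Fintype.card_fin,
      ENNReal.toReal_mul, ENNReal.toReal_pow, ENNReal.toReal_ofReal hr,
      ENNReal.toReal_ofReal (by positivity)]

theorem exists_linearIsometryEquiv_apply_eq {E F : Type*} [NormedAddCommGroup E]
    [InnerProductSpace ℝ E] [FiniteDimensional ℝ E] [NormedAddCommGroup F]
    [InnerProductSpace ℝ F] [FiniteDimensional ℝ F]
    (hEF : Module.finrank ℝ E = Module.finrank ℝ F)
    {x : E} {y : F} (hxy : ‖x‖ = ‖y‖) : ∃ φ : E ≃ₗᵢ[ℝ] F, φ x = y := by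
  let ψ : E ≃ₗᵢ[ℝ] F := (stdOrthonormalBasis ℝ E).repr.trans
    ((stdOrthonormalBasis ℝ F).reindex (finCongr hEF.symm)).repr.symm
  refine ⟨ψ.trans (ℝ ∙ (ψ x - y))ᗮ.reflection, ?_⟩
  simpa using Submodule.reflection_sub (by simpa using hxy)

theorem norm_setIntegral_sub_setIntegral_le {α F : Type*} [MeasurableSpace α] {μ : Measure α}
    [NormedAddCommGroup F] [NormedSpace ℝ F] {f : α → F} {s t : Set α} {C : ℝ}
    (hs : MeasurableSet s) (ht : MeasurableSet t) (hfs : IntegrableOn f s μ)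
    (hft : IntegrableOn f t μ) (hst : μ (s \ t) < ⊤) (hts : μ (t \ s) < ⊤)
    (hC : ∀ x, ‖f x‖ ≤ C) :
    ‖∫ x in s, f x ∂μ - ∫ x in t, f x ∂μ‖ ≤ C * μ.real (s \ t) + C * μ.real (t \ s) := by
  rw [← integral_inter_add_sdiff ht hfs, ← integral_inter_add_sdiff hs hft, Set.inter_comm,
    add_sub_add_left_eq_sub]
  exact (norm_sub_le _ _).trans (add_le_add
    (norm_setIntegral_le_of_norm_le_const hst fun x _ => hC x)
    (norm_setIntegral_le_of_norm_le_const hts fun x _ => hC x))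

section Slices

variable {V : Type*} [NormedAddCommGroup V] [InnerProductSpace ℝ V] [FiniteDimensional ℝ V]
  [MeasurableSpace V] [BorelSpace V]

theorem volume_closedBall_diff_closedBall_toLp_le {t : ℝ} (ht : 0 ≤ t) (r : ℝ) :
    volume (closedBall (0 : WithLp 2 (ℝ × V)) r \ closedBall (WithLp.toLp 2 (t, 0)) r) ≤
      ENNReal.ofReal t * volume (closedBall (0 : V) r) := by
  have hmeas : MeasurableSet
      (closedBall (0 : WithLp 2 (ℝ × V)) r \ closedBall (WithLp.toLp 2 (t, 0)) r) :=
    measurableSet_closedBall.diff measurableSet_closedBall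
  rw [← (WithLp.volume_preserving_toLp ℝ V).measure_preimage hmeas.nullMeasurableSet,
    Measure.volume_eq_prod, Measure.prod_apply_symm (hmeas.preimage (by fun_prop)),
    ← lintegral_indicator_const measurableSet_closedBall]
  refine lintegral_mono fun v => ?_
  have hslice : (fun a => (a, v)) ⁻¹' (WithLp.toLp 2 ⁻¹'
      (closedBall 0 r \ closedBall (WithLp.toLp 2 (t, 0)) r)) =
      {a | √(a ^ 2 + ‖v‖ ^ 2) ≤ r ∧ r < √((a - t) ^ 2 + ‖v‖ ^ 2)} := by
    ext a
    simp [WithLp.prod_norm_eq_of_L2, dist_eq_norm, ← WithLp.toLp_sub]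
  rw [hslice]
  -- for `‖v‖ ≤ r` the slice is `[-ρ, ρ]` minus its translate by `t`, with `ρ² = r² - ‖v‖²`
  by_cases hv : v ∈ closedBall 0 r
  · set ρ := √(r ^ 2 - ‖v‖ ^ 2)
    rw [Set.indicator_of_mem hv]
    calc volume {a | √(a ^ 2 + ‖v‖ ^ 2) ≤ r ∧ r < √((a - t) ^ 2 + ‖v‖ ^ 2)}
        ≤ volume (Set.Ico (-ρ) (-ρ + t)) := by
          refine measure_mono fun a ⟨hin, hout⟩ => ?_
          rw [sqrt_le_iff] at hin
          have ha : |a| ≤ ρ := abs_le_sqrt (by linarith)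
          refine ⟨neg_le_of_abs_le ha, ?_⟩
          by_contra! hat
          have : (a - t) ^ 2 ≤ ρ ^ 2 := sq_le_sq' (by linarith) (by linarith [le_abs_self a])
          rw [sq_sqrt (by linarith [sq_nonneg a])] at this
          exact hout.not_ge (sqrt_le_iff.mpr ⟨hin.1, by linarith⟩)
      _ = ENNReal.ofReal t := by simp
  · rw [Set.indicator_of_notMem hv, nonpos_iff_eq_zero]
    refine measure_mono_null (fun a ⟨hin, _⟩ => hv ?_) measure_empty
    rw [mem_closedBall_zero_iff]
    exact (le_sqrt_of_sq_le (by linarith [sq_nonneg a])).trans hin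

end Slices

section InnerProductSpace

variable {E : Type*} [NormedAddCommGroup E] [InnerProductSpace ℝ E] [FiniteDimensional ℝ E]
  [MeasurableSpace E] [BorelSpace E]

theorem measureReal_closedBall_diff_closedBall_le {n : ℕ} (hn : Module.finrank ℝ E = n + 1)
    (x y : E) (r : ℝ) :
    volume.real (closedBall x r \ closedBall y r) ≤
      ‖x - y‖ * volume.real (closedBall (0 : EuclideanSpace ℝ (Fin n)) r) := by
  obtain ⟨φ, hφ⟩ := exists_linearIsometryEquiv_apply_eq
    (F := WithLp 2 (ℝ × EuclideanSpace ℝ (Fin n))) (x := y - x)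
    (y := WithLp.toLp 2 (‖x - y‖, 0))
    (by rw [hn, (WithLp.linearEquiv 2 ℝ _).finrank_eq, Module.finrank_prod]; simp [add_comm])
    (by simp [norm_sub_rev])
  have hpre : closedBall x r \ closedBall y r = (φ ∘ (· - x)) ⁻¹'
      (closedBall 0 r \ closedBall (WithLp.toLp 2 (‖x - y‖, 0)) r) := by
    ext z
    simp [← hφ, dist_eq_norm, ← map_sub]
  have hvol : volume (closedBall x r \ closedBall y r) =
      volume (closedBall (0 : WithLp 2 (ℝ × EuclideanSpace ℝ (Fin n))) r \
        closedBall (WithLp.toLp 2 (‖x - y‖, 0)) r) := by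
    rw [hpre, ((φ.measurePreserving).comp (measurePreserving_sub_right volume x)).measure_preimage
      (measurableSet_closedBall.diff measurableSet_closedBall).nullMeasurableSet]
  have := ENNReal.toReal_mono
    (ENNReal.mul_ne_top ENNReal.ofReal_ne_top measure_closedBall_lt_top.ne)
    (volume_closedBall_diff_closedBall_toLp_le (V := EuclideanSpace ℝ (Fin n))
      (norm_nonneg (x - y)) r)
  rwa [ENNReal.toReal_mul, ENNReal.toReal_ofReal (norm_nonneg _), ← hvol] at this

theorem two_mul_measureReal_closedBall_le {n : ℕ} (hn : Module.finrank ℝ E = n + 1) (x : E)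
    {r : ℝ} (hr : 0 ≤ r) :
    2 * r * volume.real (closedBall (0 : EuclideanSpace ℝ (Fin n)) r) ≤
      √(n + 1) * volume.real (closedBall x r) := by
  have : Nontrivial E := Module.nontrivial_of_finrank_eq_succ hn
  have hA : 0 < Gamma (n / 2 + 1) := Gamma_pos_of_pos (by positivity)
  rw [EuclideanSpace.measureReal_closedBall_fin n 0 hr, Measure.real,
    InnerProductSpace.volume_closedBall, hn, ENNReal.toReal_mul, ENNReal.toReal_pow,
    ENNReal.toReal_ofReal hr, ENNReal.toReal_ofReal (by positivity), Nat.cast_succ,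
    Gamma_add_one (s := ((n : ℝ) + 1) / 2) (by positivity)]
  calc 2 * r * (r ^ n * (√π ^ n / Gamma (n / 2 + 1)))
      = 2 * r ^ (n + 1) * √π ^ n * (1 / Gamma (n / 2 + 1)) := by ring
    _ ≤ 2 * r ^ (n + 1) * √π ^ n * (√π / (√(n + 1) * Gamma ((n + 1) / 2))) := by
      refine mul_le_mul_of_nonneg_left ?_ (by positivity)
      rw [div_le_div_iff₀ hA (by positivity)]
      linarith [sqrt_mul_Gamma_le n]
    _ = √(n + 1) * (r ^ (n + 1) * (√π ^ (n + 1) / ((n + 1) / 2 * Gamma ((n + 1) / 2)))) := by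
      field_simp
      rw [sq_sqrt (by positivity)]
      ring

theorem norm_setIntegral_closedBall_sub_le {n : ℕ} (hn : Module.finrank ℝ E = n + 1)
    {F : Type*} [NormedAddCommGroup F] [NormedSpace ℝ F] {g : E → F} {C : ℝ}
    (hg : AEStronglyMeasurable g) (hC : ∀ u, ‖g u‖ ≤ C) (x y : E) (r : ℝ) :
    ‖(∫ u in closedBall x r, g u) - ∫ u in closedBall y r, g u‖ ≤
      2 * C * ‖x - y‖ * volume.real (closedBall (0 : EuclideanSpace ℝ (Fin n)) r) := by
  have hC0 : 0 ≤ C := (norm_nonneg _).trans (hC x)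
  have hint (z : E) : IntegrableOn g (closedBall z r) :=
    Measure.integrableOn_of_bounded measure_closedBall_lt_top.ne hg (ae_of_all _ hC)
  have hfin (z w : E) : volume (closedBall z r \ closedBall w r) < ⊤ :=
    measure_lt_top_of_subset Set.sdiff_subset measure_closedBall_lt_top.ne
  calc ‖(∫ u in closedBall x r, g u) - ∫ u in closedBall y r, g u‖
      ≤ C * volume.real (closedBall x r \ closedBall y r) +
          C * volume.real (closedBall y r \ closedBall x r) :=
        norm_setIntegral_sub_setIntegral_le measurableSet_closedBall measurableSet_closedBall
          (hint x) (hint y) (hfin x y) (hfin y x) hC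
    _ ≤ C * (‖x - y‖ * volume.real (closedBall (0 : EuclideanSpace ℝ (Fin n)) r)) +
          C * (‖x - y‖ * volume.real (closedBall (0 : EuclideanSpace ℝ (Fin n)) r)) := by
        grw [measureReal_closedBall_diff_closedBall_le hn x y,
          measureReal_closedBall_diff_closedBall_le hn y x, norm_sub_rev y x]
    _ = 2 * C * ‖x - y‖ * volume.real (closedBall (0 : EuclideanSpace ℝ (Fin n)) r) := by ring

theorem norm_setAverage_closedBall_sub_le {F : Type*} [NormedAddCommGroup F] [NormedSpace ℝ F]
    {g : E → F} {C δ : ℝ} (hg : AEStronglyMeasurable g) (hC : ∀ u, ‖g u‖ ≤ C) (hδ : 0 < δ)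
    (x y : E) :
    ‖(⨍ u in closedBall x δ, g u) - ⨍ u in closedBall y δ, g u‖ ≤
      √(Module.finrank ℝ E) * C / δ * ‖x - y‖ := by
  rcases hn : Module.finrank ℝ E with _ | n
  · have : Subsingleton E := Module.finrank_zero_iff.mp hn
    simp [Subsingleton.elim x y]
  have hC0 : 0 ≤ C := (norm_nonneg _).trans (hC x)
  have hvol : volume.real (closedBall y δ) = volume.real (closedBall x δ) := by
    simp only [Measure.real, Measure.addHaar_closedBall' _ _ hδ.le]
  have hpos : 0 < volume.real (closedBall x δ) :=
    ENNReal.toReal_pos (measure_closedBall_pos volume x hδ).ne' measure_closedBall_lt_top.ne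
  rw [setAverage_eq, setAverage_eq, hvol, ← smul_sub, norm_smul, norm_inv, norm_of_nonneg hpos.le]
  calc (volume.real (closedBall x δ))⁻¹ *
        ‖(∫ u in closedBall x δ, g u) - ∫ u in closedBall y δ, g u‖
      ≤ (volume.real (closedBall x δ))⁻¹ *
          (2 * C * ‖x - y‖ * volume.real (closedBall (0 : EuclideanSpace ℝ (Fin n)) δ)) := by
        grw [norm_setIntegral_closedBall_sub_le hn hg hC x y δ]
    _ = (volume.real (closedBall x δ))⁻¹ * (C * ‖x - y‖ / δ *
          (2 * δ * volume.real (closedBall (0 : EuclideanSpace ℝ (Fin n)) δ))) := by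
        field_simp
    _ ≤ (volume.real (closedBall x δ))⁻¹ *
          (C * ‖x - y‖ / δ * (√(n + 1) * volume.real (closedBall x δ))) := by
        grw [two_mul_measureReal_closedBall_le hn x hδ.le]
    _ = √(↑(n + 1)) * C / δ * ‖x - y‖ := by
        push_cast
        field_simp

end InnerProductSpace

section NormedSpace

variable {E : Type*} [NormedAddCommGroup E] [NormedSpace ℝ E] [FiniteDimensional ℝ E]
  [MeasurableSpace E] [BorelSpace E] {F : Type*} [NormedAddCommGroup F] [NormedSpace ℝ F]

theorem setAverage_unitClosedBall_comp_add_smul (μ : Measure E) [μ.IsAddHaarMeasure]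
    (f : E → F) (x : E) {δ : ℝ} (hδ : 0 < δ) :
    ⨍ v in closedBall 0 1, f (x + δ • v) ∂μ = ⨍ u in closedBall x δ, f u ∂μ := by
  have htrans : ∫ u in closedBall 0 δ, f (x + u) ∂μ = ∫ u in closedBall x δ, f u ∂μ := by
    rw [← (measurePreserving_add_left μ x).setIntegral_preimage_emb
      (measurableEmbedding_addLeft x) f (closedBall x δ)]
    congr 2
    ext u
    simp
  rw [setAverage_eq, setAverage_eq,
    Measure.setIntegral_comp_smul_of_pos μ (fun u => f (x + u)) _ hδ,
    smul_unitClosedBall_of_nonneg hδ.le, htrans, smul_smul, Measure.real, Measure.real,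
    μ.addHaar_closedBall' x hδ.le, ENNReal.toReal_mul, ENNReal.toReal_ofReal (by positivity),
    mul_inv, mul_comm]

variable [FiniteDimensional ℝ F]

theorem ae_differentiableAt_add_smul {μ ν : Measure E} [ν.IsAddHaarMeasure] (hμν : μ ≪ ν)
    {h : E → F} {K : ℝ≥0} (hh : LipschitzWith K h) {δ : ℝ} (hδ : δ ≠ 0) (x : E) :
    ∀ᵐ v ∂μ, DifferentiableAt ℝ h (x + δ • v) :=
  hμν.ae_le (((quasiMeasurePreserving_add_left ν x).comp
    (Measure.quasiMeasurePreserving_smul ν hδ)).ae hh.ae_differentiableAt)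

theorem hasFDerivAt_integral_comp_add_smul {μ ν : Measure E} [ν.IsAddHaarMeasure]
    [IsFiniteMeasure μ] (hμν : μ ≪ ν) {h : E → F} {K : ℝ≥0} (hh : LipschitzWith K h) {δ : ℝ}
    (hδ : δ ≠ 0) {x : E} (hint : Integrable (fun v => h (x + δ • v)) μ) :
    HasFDerivAt (fun x => ∫ v, h (x + δ • v) ∂μ) (∫ v, fderiv ℝ h (x + δ • v) ∂μ) x := by
  refine (hasFDerivAt_integral_of_dominated_loc_of_lip (bound := fun _ => (K : ℝ)) Filter.univ_mem
    (Filter.Eventually.of_forall fun y => (hh.continuous.comp (by fun_prop)).aestronglyMeasurable)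
    hint ((measurable_fderiv ℝ h).comp (by fun_prop)).aestronglyMeasurable
    (ae_of_all _ fun v => ?_) (integrable_const _) ?_).2
  · rw [nnabs_coe]
    exact (LipschitzWith.of_dist_le_mul fun a b => (hh.dist_le_mul _ _).trans_eq
      (by rw [dist_add_right])).lipschitzOnWith
  · filter_upwards [ae_differentiableAt_add_smul hμν hh hδ x] with v hv
    simpa [Function.comp_def] using hv.hasFDerivAt.comp x ((hasFDerivAt_id x).add_const (δ • v))

end NormedSpace

instance (d : ℕ) : IsProbabilityMeasure (unifBall d) :=
  ProbabilityTheory.cond_isProbabilityMeasure_of_finite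
    (measure_closedBall_pos volume 0 one_pos).ne' measure_closedBall_lt_top.ne

theorem unifBall_absolutelyContinuous (d : ℕ) : unifBall d ≪ volume :=
  ProbabilityTheory.cond_absolutelyContinuous

theorem integral_unifBall {F : Type*} [NormedAddCommGroup F] [NormedSpace ℝ F] {d : ℕ}
    (g : EuclideanSpace ℝ (Fin d) → F) : ∫ v, g v ∂unifBall d = ⨍ v in closedBall 0 1, g v :=
  (setAverage_eq' volume g _).symm

theorem Continuous.integrable_unifBall {F : Type*} [NormedAddCommGroup F] {d : ℕ}
    {g : EuclideanSpace ℝ (Fin d) → F} (hg : Continuous g) : Integrable g (unifBall d) :=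
  (hg.continuousOn.integrableOn_compact (isCompact_closedBall 0 1)).smul_measure
    (ENNReal.inv_ne_top.mpr (measure_closedBall_pos volume 0 one_pos).ne')

/-- If `h : ℝ^d → ℝ` is `L`-Lipschitz, then its uniform smoothing `ĥ_δ` is differentiable
and `(√d·L/δ)`-smooth, i.e. its gradient is `(√d·L/δ)`-Lipschitz. -/
theorem uniformSmoothing_smooth (d : ℕ) (L δ : ℝ) (hL : 0 ≤ L) (hδ : 0 < δ)
    (h : EuclideanSpace ℝ (Fin d) → ℝ)
    (hlip : ∀ x y, |h x - h y| ≤ L * ‖x - y‖) :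
    (∀ x, DifferentiableAt ℝ (fun x => ∫ v, h (x + δ • v) ∂(unifBall d)) x) ∧
      ∀ x y : EuclideanSpace ℝ (Fin d),
        ‖gradient (fun x => ∫ v, h (x + δ • v) ∂(unifBall d)) x -
            gradient (fun x => ∫ v, h (x + δ • v) ∂(unifBall d)) y‖ ≤
          Real.sqrt d * L / δ * ‖x - y‖ := by
  have hh : LipschitzWith L.toNNReal h :=
    LipschitzWith.of_dist_le' fun x y => by simpa [Real.dist_eq, dist_eq_norm] using hlip x y
  have hderiv (x : EuclideanSpace ℝ (Fin d)) : HasFDerivAt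
      (fun x => ∫ v, h (x + δ • v) ∂unifBall d) (⨍ u in closedBall x δ, fderiv ℝ h u) x := by
    have := hasFDerivAt_integral_comp_add_smul (x := x) (unifBall_absolutelyContinuous d) hh
      hδ.ne' (hh.continuous.comp (by fun_prop)).integrable_unifBall
    rwa [integral_unifBall, setAverage_unitClosedBall_comp_add_smul _ _ _ hδ] at this
  refine ⟨fun x => (hderiv x).differentiableAt, fun x y => ?_⟩
  rw [(hasFDerivAt_iff_hasGradientAt.mp (hderiv x)).gradient,
    (hasFDerivAt_iff_hasGradientAt.mp (hderiv y)).gradient, ← map_sub,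
    LinearIsometryEquiv.norm_map]
  simpa [Real.coe_toNNReal _ hL] using norm_setAverage_closedBall_sub_le
    (measurable_fderiv ℝ h).aestronglyMeasurable (fun u => norm_fderiv_le_of_lipschitz ℝ hh) hδ x y
end
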